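/- Let E be a real inner product space and let u₁, …, u_m ∈ E be snapshots with correlation (Gram) matrix C, C_{ij} = ⟪u_i, u_j⟫. Let q₁, …, q_m ∈ ℝ^m be an orthonormal basis of eigenvectors of C with corresponding eigenvalues λ₁ ≥ λ₂ ≥ ⋯ ≥ λ_m ≥ 0 in decreasing order. Fix N ≤ m and assume λ_N > 0 (so λ₁, …, λ_N are all positive), and define the POD basis vectors φ_k := λ_k^{-1/2} ∑_{j=1}^m (q_k)_j u_j for k = 1, …, N. Then the POD basis attains the optimal projection error: ∑_{i=1}^m ‖u_i − ∑_{k=1}^N ⟪u_i, φ_k⟫ φ_k‖² = ∑_{j=N+1}^m λ_j, the sum of the m − N smallest eigenvalues of the correlation matrix. Consequently the POD minimization problem is solved by the basis constructed from the eigenvectors of C associated with the N largest eigenvalues. -/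

import Mathlib

/-!
Write `C` for the Gram matrix of the snapshots. The eigenvalue equation `C qₖ = λₖ qₖ` gives
`⟪uᵢ, φₖ⟫ = √λₖ (qₖ)ᵢ`, so the `φₖ` are orthonormal and `∑ᵢ ⟪uᵢ, φₖ⟫² = λₖ`. By Pythagoras the
error is therefore `∑ᵢ ‖uᵢ‖² - ∑_{k<N} λₖ = tr C - ∑_{k<N} λₖ`, and `tr C = ∑ⱼ λⱼ` because the
`qⱼ` are the rows of an orthogonal matrix diagonalising `C`.
-/

open scoped BigOperators RealInnerProductSpace
open Matrix

theorem Matrix.trace_eq_sum_of_orthonormal_eigenvectors {n R : Type*} [Fintype n] [DecidableEq n]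
    [CommRing R] (C : Matrix n n R) (lam : n → R) (q : n → n → R)
    (heig : ∀ j, C *ᵥ q j = lam j • q j)
    (horth : ∀ j k, q j ⬝ᵥ q k = if j = k then 1 else 0) :
    C.trace = ∑ j, lam j := by
  have hQQt : of q * (of q)ᵀ = 1 := by
    ext j k
    exact horth j k
  have hdiag : ∀ j, (of q * (C * (of q)ᵀ)) j j = lam j := by
    intro j
    change q j ⬝ᵥ (C *ᵥ q j) = lam j
    rw [heig, dotProduct_smul, horth, if_pos rfl, smul_eq_mul, mul_one]
  calc C.trace = (C * (of q)ᵀ * of q).trace := by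
        rw [Matrix.mul_assoc, mul_eq_one_comm.mp hQQt, Matrix.mul_one]
    _ = (of q * (C * (of q)ᵀ)).trace := trace_mul_comm _ _
    _ = ∑ j, lam j := Finset.sum_congr rfl fun j _ => hdiag j

theorem Orthonormal.norm_sub_sum_inner_smul_sq {E ι : Type*} [NormedAddCommGroup E]
    [InnerProductSpace ℝ E] [Fintype ι] {φ : ι → E} (hφ : Orthonormal ℝ φ) (x : E) :
    ‖x - ∑ k, ⟪x, φ k⟫ • φ k‖ ^ 2 = ‖x‖ ^ 2 - ∑ k, ⟪x, φ k⟫ ^ 2 := by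
  have hxy : ⟪x, ∑ k, ⟪x, φ k⟫ • φ k⟫ = ∑ k, ⟪x, φ k⟫ ^ 2 := by
    simp only [inner_sum, real_inner_smul_right, sq]
  have hyy : ‖∑ k, ⟪x, φ k⟫ • φ k‖ ^ 2 = ∑ k, ⟪x, φ k⟫ ^ 2 := by
    rw [← real_inner_self_eq_norm_sq]
    simp only [sum_inner, real_inner_smul_left, hφ.inner_right_fintype, sq]
  rw [norm_sub_sq_real, hxy, hyy]
  ring

theorem Fin.sum_castLE_add_sum_filter_le {M : Type*} [AddCommMonoid M] {N m : ℕ} (h : N ≤ m)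
    (f : Fin m → M) :
    ∑ k : Fin N, f (Fin.castLE h k) + ∑ j ∈ Finset.univ.filter (fun j : Fin m => N ≤ (j : ℕ)), f j
      = ∑ j, f j := by
  have himage :
      Finset.univ.map (Fin.castLEEmb h) = Finset.univ.filter (fun j : Fin m => ¬ N ≤ j) := by
    ext j
    simp only [Finset.mem_map, Finset.mem_univ, true_and, Fin.castLEEmb_apply, Finset.mem_filter,
      not_le]
    exact ⟨fun ⟨k, hk⟩ => hk ▸ k.isLt, fun hj => ⟨⟨j, hj⟩, rfl⟩⟩
  have hlow := Finset.sum_map Finset.univ (Fin.castLEEmb h) f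
  rw [himage] at hlow
  rw [← Finset.sum_filter_add_sum_filter_not Finset.univ (fun j : Fin m => ¬ N ≤ (j : ℕ)), hlow]
  simp only [not_not, Fin.castLEEmb_apply]

section POD

variable {E ι : Type*} [NormedAddCommGroup E] [InnerProductSpace ℝ E] [Fintype ι]

noncomputable def podMode (u : ι → E) (lam : ℝ) (v : ι → ℝ) : E :=
  (Real.sqrt lam)⁻¹ • ∑ j, v j • u j

theorem inner_sum_smul_eq_gram_mulVec (u : ι → E) (v : ι → ℝ) (i : ι) :
    ⟪u i, ∑ j, v j • u j⟫ = (gram ℝ u *ᵥ v) i := by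
  simp only [inner_sum, real_inner_smul_right, mulVec, dotProduct, gram_apply, mul_comm]

theorem inner_podMode {u : ι → E} {lam : ℝ} {v : ι → ℝ} (hlam : 0 < lam)
    (hv : gram ℝ u *ᵥ v = lam • v) (i : ι) :
    ⟪u i, podMode u lam v⟫ = Real.sqrt lam * v i := by
  have hsqrt : Real.sqrt lam ≠ 0 := (Real.sqrt_pos.mpr hlam).ne'
  rw [podMode, real_inner_smul_right, inner_sum_smul_eq_gram_mulVec, hv, Pi.smul_apply, smul_eq_mul,
    inv_mul_eq_iff_eq_mul₀ hsqrt, ← mul_assoc, Real.mul_self_sqrt hlam.le]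

theorem sum_inner_podMode_sq {u : ι → E} {lam : ℝ} {v : ι → ℝ} (hlam : 0 < lam)
    (hv : gram ℝ u *ᵥ v = lam • v) :
    ∑ i, ⟪u i, podMode u lam v⟫ ^ 2 = lam * (v ⬝ᵥ v) := by
  rw [dotProduct, Finset.mul_sum]
  refine Finset.sum_congr rfl fun i _ => ?_
  rw [inner_podMode hlam hv, mul_pow, Real.sq_sqrt hlam.le, sq]

theorem orthonormal_podMode {κ : Type*} [DecidableEq κ] (u : ι → E) {lam : κ → ℝ} {q : κ → ι → ℝ}
    (hlam : ∀ k, 0 < lam k) (heig : ∀ k, gram ℝ u *ᵥ q k = lam k • q k)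
    (horth : ∀ k l, q k ⬝ᵥ q l = if k = l then 1 else 0) :
    Orthonormal ℝ fun k => podMode u (lam k) (q k) := by
  rw [orthonormal_iff_ite]
  intro k l
  have hsqrt : Real.sqrt (lam k) ≠ 0 := (Real.sqrt_pos.mpr (hlam k)).ne'
  set φl := podMode u (lam l) (q l)
  have hφl : ∀ j, ⟪u j, φl⟫ = Real.sqrt (lam l) * q l j := inner_podMode (hlam l) (heig l)
  calc ⟪podMode u (lam k) (q k), φl⟫
      = (Real.sqrt (lam k))⁻¹ * Real.sqrt (lam l) * (q k ⬝ᵥ q l) := by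
        simp only [podMode, real_inner_smul_left, sum_inner, hφl, dotProduct, Finset.mul_sum]
        exact Finset.sum_congr rfl fun j _ => by ring
    _ = if k = l then 1 else 0 := by
        rw [horth]
        split_ifs with hkl
        · subst hkl; field_simp
        · ring

end POD

theorem pod_basis_attains_optimal_error_general
    {E : Type*} [NormedAddCommGroup E] [InnerProductSpace ℝ E]
    (m : ℕ) (u : Fin m → E)
    (C : Matrix (Fin m) (Fin m) ℝ) (hC : ∀ i j, C i j = ⟪u i, u j⟫)
    (lam : Fin m → ℝ) (q : Fin m → (Fin m → ℝ))
    (heig : ∀ j, C.mulVec (q j) = lam j • q j)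
    (hq_orthonormal : ∀ j k : Fin m,
      (∑ l, q j l * q k l) = if j = k then (1 : ℝ) else 0)
    (N : ℕ) (hN : N ≤ m)
    (hlam_pos : ∀ k : Fin m, (k : ℕ) < N → 0 < lam k)
    (φ : Fin N → E)
    (hφ : ∀ k : Fin N,
      φ k = (Real.sqrt (lam (Fin.castLE hN k)))⁻¹ •
        ∑ j, q (Fin.castLE hN k) j • u j) :
    ∑ i, ‖u i - ∑ k, ⟪u i, φ k⟫ • φ k‖ ^ 2
      = ∑ j ∈ Finset.univ.filter (fun j : Fin m => N ≤ (j : ℕ)), lam j := by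
  obtain rfl : C = gram ℝ u := Matrix.ext hC
  have hφ' : φ = fun k => podMode u (lam (Fin.castLE hN k)) (q (Fin.castLE hN k)) := funext hφ
  have hq : ∀ j k, q j ⬝ᵥ q k = if j = k then 1 else 0 := hq_orthonormal
  have hpos : ∀ k : Fin N, 0 < lam (Fin.castLE hN k) := fun k => hlam_pos _ k.isLt
  have horth : Orthonormal ℝ φ := hφ' ▸ orthonormal_podMode u hpos (fun k => heig _)
    fun k l => by simp only [hq, (Fin.castLE_injective hN).eq_iff]
  calc ∑ i, ‖u i - ∑ k, ⟪u i, φ k⟫ • φ k‖ ^ 2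
      = ∑ i, ‖u i‖ ^ 2 - ∑ k, ∑ i, ⟪u i, φ k⟫ ^ 2 := by
        simp only [horth.norm_sub_sum_inner_smul_sq, Finset.sum_sub_distrib]
        rw [Finset.sum_comm]
    _ = ∑ j, lam j - ∑ k : Fin N, lam (Fin.castLE hN k) := by
        congr 1
        · rw [← (gram ℝ u).trace_eq_sum_of_orthonormal_eigenvectors lam q heig hq]
          exact Finset.sum_congr rfl fun i _ => (real_inner_self_eq_norm_sq (u i)).symm
        · refine Finset.sum_congr rfl fun k _ => ?_
          rw [hφ', sum_inner_podMode_sq (hpos k) (heig _), hq, if_pos rfl, mul_one]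
    _ = ∑ j ∈ Finset.univ.filter (fun j : Fin m => N ≤ (j : ℕ)), lam j := by
        rw [← Fin.sum_castLE_add_sum_filter_le hN lam, add_sub_cancel_left]

/-- Optimality of the POD basis: the basis built from the eigenvectors of the
snapshot correlation (Gram) matrix `C` associated with the `N` largest
eigenvalues attains the optimal total squared projection error, namely the sum
of the `m − N` smallest eigenvalues of `C`. -/
theorem pod_basis_attains_optimal_error
    {E : Type*} [NormedAddCommGroup E] [InnerProductSpace ℝ E]
    (m : ℕ) (u : Fin m → E)
    (C : Matrix (Fin m) (Fin m) ℝ) (hC : ∀ i j, C i j = ⟪u i, u j⟫)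
    (lam : Fin m → ℝ) (q : Fin m → (Fin m → ℝ))
    (hlam_nonneg : ∀ j, 0 ≤ lam j)
    (hlam_mono : ∀ j k : Fin m, j ≤ k → lam k ≤ lam j)
    (heig : ∀ j, C.mulVec (q j) = lam j • q j)
    (hq_orthonormal : ∀ j k : Fin m,
      (∑ l, q j l * q k l) = if j = k then (1 : ℝ) else 0)
    (N : ℕ) (hN : N ≤ m)
    (hlam_pos : ∀ k : Fin m, (k : ℕ) < N → 0 < lam k)
    (φ : Fin N → E)
    (hφ : ∀ k : Fin N,
      φ k = (Real.sqrt (lam (Fin.castLE hN k)))⁻¹ •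
        ∑ j, q (Fin.castLE hN k) j • u j) :
    ∑ i, ‖u i - ∑ k, ⟪u i, φ k⟫ • φ k‖ ^ 2
      = ∑ j ∈ Finset.univ.filter (fun j : Fin m => N ≤ (j : ℕ)), lam j :=
  pod_basis_attains_optimal_error_general m u C hC lam q heig hq_orthonormal N hN hlam_pos φ hφ
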